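/- arXiv:0811.3056 — 2 statements merged into one kernel-verified Lean document; each statement's English description precedes it below -/
import Mathlib

section
/- (Lemma 3.1, with normalization made precise) Let Re s > 3/2, x ∈ ℂ, z ∈ ℂ∖Γ and y ∈ ℝ. Then R(s, x, z, y) = (πα Γ(s) χ(z, x))^{−1} · ∫_{−∞}^{∞} I(s, z, x, k/(πα)) e^{−2πiky} dk, where Γ is Euler's Gamma function and the integral over k converges absolutely. -/
noncomputable section

/-- The lattice Γ = ℤ + τℤ, as a map ℤ × ℤ → ℂ. -/
def lat (τ : ℂ) (p : ℤ × ℤ) : ℂ := (p.1 : ℂ) + (p.2 : ℂ) * τ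

/-- α = Im τ / π. -/
def alf (τ : ℂ) : ℝ := τ.im / Real.pi

/-- The character χ(γ, x) = exp(α⁻¹(γ·conj x − conj γ·x)). -/
def chi (τ γ x : ℂ) : ℂ :=
  Complex.exp (((alf τ)⁻¹ : ℝ) * (γ * (starRingEnd ℂ) x - (starRingEnd ℂ) γ * x))

/-- The series R(s, x, z, y) = Σ_{γ∈Γ} χ(γ, x)((παy)² + |z + γ|²)^{−s}. -/
def Rser (τ s x z : ℂ) (y : ℝ) : ℂ :=
  ∑' p : ℤ × ℤ, chi τ (lat τ p) x *
    (((Real.pi * alf τ * y) ^ 2 + ‖z + lat τ p‖ ^ 2 : ℝ) : ℂ) ^ (-s)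

/-- The heat-kernel series
I(s, x, z, y) = √π Σ_{γ∈Γ} χ(γ+x, z) ∫₀^∞ t^{s−3/2} exp(−π²y²/t − t|γ+x|²) dt. -/
def Iser (τ s x z : ℂ) (y : ℝ) : ℂ :=
  (Real.sqrt Real.pi : ℂ) * ∑' p : ℤ × ℤ, chi τ (lat τ p + x) z *
    ∫ t in Set.Ioi (0 : ℝ), (t : ℂ) ^ (s - 3 / 2) *
      (Real.exp (-(Real.pi ^ 2 * y ^ 2) / t - t * ‖lat τ p + x‖ ^ 2) : ℂ)

/-!
Each summand of `Iser` at frequency `k / (πα)` is an integral over `t > 0` of a Gaussian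
in `k`. The integrand is absolutely integrable on `(0, ∞) × ℝ`, so the Fourier integral in `k`
may be taken first: it turns `exp (-k² / (α² t))` into `α √(π t) exp (-(π α y)² t)`, and what
remains is Euler's integral
`∫ t ^ (s - 1) exp (-((π α y)² + |γ + z|²) t) dt = Γ(s) ((π α y)² + |γ + z|²) ^ (-s)`.
The `γ`-th term has `L¹` norm `O(|γ + z| ^ (-2 Re s))`, summable over the lattice, which
justifies exchanging sum and integral; finally `χ(γ + z, x) = χ(γ, x) χ(z, x)`.
-/

open MeasureTheory Set Complex Filter
open scoped Real ENNReal

lemma integrableOn_rpow_mul_exp_neg_mul {a r : ℝ} (ha : -1 < a) (hr : 0 < r) :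
    IntegrableOn (fun t : ℝ => t ^ a * Real.exp (-(r * t))) (Ioi 0) := by
  simpa using integrableOn_rpow_mul_exp_neg_mul_rpow ha one_pos hr

lemma norm_cexp_neg_two_pi_I_mul (k y : ℝ) : ‖cexp (-2 * π * I * k * y)‖ = 1 := by
  rw [norm_exp]; simp

lemma ofReal_sqrt_eq_cpow {x : ℝ} (hx : 0 ≤ x) :
    ((√x : ℝ) : ℂ) = (x : ℂ) ^ (1 / 2 : ℂ) := by
  rw [Real.sqrt_eq_rpow, ofReal_cpow hx]
  norm_num

lemma aestronglyMeasurable_restrict_prod_of_continuousOn {E : Type*} [NormedAddCommGroup E]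
    {S : Set ℝ} (hS : MeasurableSet S) {f : ℝ × ℝ → E} (hf : ContinuousOn f (S ×ˢ univ)) :
    AEStronglyMeasurable f ((volume.restrict S).prod volume) := by
  rw [← Measure.restrict_univ (μ := volume), Measure.prod_restrict,
    Measure.restrict_univ]
  exact hf.aestronglyMeasurable (hS.prod MeasurableSet.univ)

lemma integrable_tsum_of_summable_integral_norm {X E ι : Type*} [MeasurableSpace X]
    {μ : Measure X} [NormedAddCommGroup E] [CompleteSpace E] [Countable ι] {F : ι → X → E}
    (hF_int : ∀ i, Integrable (F i) μ) (hF_sum : Summable fun i => ∫ x, ‖F i x‖ ∂μ) :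
    Integrable (fun x => ∑' i, F i x) μ := by
  have hfin : ∫⁻ x, ∑' i, ‖F i x‖ₑ ∂μ < ∞ := by
    rw [lintegral_tsum fun i => (hF_int i).1.enorm]
    simp_rw [← ofReal_integral_norm_eq_lintegral_enorm (hF_int _)]
    rw [← ENNReal.ofReal_tsum_of_nonneg (fun i => integral_nonneg fun _ => norm_nonneg _) hF_sum]
    exact ENNReal.ofReal_lt_top
  have hsum : ∀ᵐ x ∂μ, ∑' i, ‖F i x‖ₑ < ∞ :=
    ae_lt_top' (AEMeasurable.tsum fun i => (hF_int i).1.enorm) hfin.ne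
  refine ⟨aestronglyMeasurable_of_tendsto_ae atTop
    (fun s => Finset.aestronglyMeasurable_fun_sum s fun i _ => (hF_int i).1) ?_,
    (lintegral_mono fun x => enorm_tsum_le_tsum_enorm).trans_lt hfin⟩
  filter_upwards [hsum] with x hx using (Summable.of_enorm hx.ne).hasSum

def heatKernel (s : ℂ) (α A t k : ℝ) : ℂ :=
  (t : ℂ) ^ (s - 3 / 2) * (Real.exp (-(k ^ 2 / α ^ 2) / t - t * A) : ℂ)

def heatIntegral (s : ℂ) (α A k : ℝ) : ℂ := ∫ t in Ioi 0, heatKernel s α A t k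

section HeatKernel

variable {s : ℂ} {α A t : ℝ}

lemma norm_heatKernel (ht : 0 < t) (k : ℝ) :
    ‖heatKernel s α A t k‖ =
      t ^ (s.re - 3 / 2) * Real.exp (-(k ^ 2 / α ^ 2) / t - t * A) := by
  rw [heatKernel, norm_mul, norm_cpow_eq_rpow_re_of_pos ht, norm_real,
    Real.norm_of_nonneg (Real.exp_nonneg _)]
  simp

lemma continuousOn_heatKernel :
    ContinuousOn (Function.uncurry (heatKernel s α A)) (Ioi 0 ×ˢ univ) := by
  refine ContinuousOn.mul (fun q hq => ?_) (continuous_ofReal.comp_continuousOn ?_)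
  · exact ((continuous_ofReal.comp continuous_fst).continuousAt.cpow continuousAt_const
      (ofReal_mem_slitPlane.2 hq.1)).continuousWithinAt
  · refine Real.continuous_exp.comp_continuousOn (ContinuousOn.sub ?_ (by fun_prop))
    exact ((continuous_snd.pow 2).div_const _).neg.continuousOn.div continuous_fst.continuousOn
      fun q hq => hq.1.ne'

lemma heatKernel_mul_cexp_eq (ht : 0 < t) (k y : ℝ) :
    heatKernel s α A t k * cexp (-2 * π * I * k * y) = (t : ℂ) ^ (s - 3 / 2) *
      cexp (-((α ^ 2 * t : ℝ) : ℂ)⁻¹ * k ^ 2 + (-2 * π * I * y) * k +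
        ((-(t * A) : ℝ) : ℂ)) := by
  rw [heatKernel, mul_assoc, ofReal_exp, ← Complex.exp_add]
  congr 2
  have : (t : ℂ) ≠ 0 := ofReal_ne_zero.2 ht.ne'
  push_cast
  field_simp
  ring

lemma integral_heatKernel_mul_cexp (hα : 0 < α) (ht : 0 < t) (y : ℝ) :
    ∫ k : ℝ, heatKernel s α A t k * cexp (-2 * π * I * k * y) =
      ((α * √π : ℝ) : ℂ) *
        ((t : ℂ) ^ (s - 1) * (Real.exp (-(((π * α * y) ^ 2 + A) * t)) : ℂ)) := by
  have hb : (-((α ^ 2 * t : ℝ) : ℂ)⁻¹).re < 0 := by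
    rw [neg_re, ← ofReal_inv, ofReal_re, neg_lt_zero]; positivity
  simp_rw [heatKernel_mul_cexp_eq ht]
  rw [integral_const_mul, integral_cexp_quadratic hb, neg_neg]
  have htc : (t : ℂ) ≠ 0 := ofReal_ne_zero.2 ht.ne'
  have hsqrt : ((π : ℂ) / ((α ^ 2 * t : ℝ) : ℂ)⁻¹) ^ (1 / 2 : ℂ) =
      ((α * √π : ℝ) : ℂ) * (t : ℂ) ^ (1 / 2 : ℂ) := by
    rw [div_inv_eq_mul, ← ofReal_mul, show π * (α ^ 2 * t) = (α * √π) ^ 2 * t by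
      rw [mul_pow, Real.sq_sqrt Real.pi_pos.le]; ring, ofReal_mul,
      mul_cpow_ofReal_nonneg (sq_nonneg _) ht.le, ← ofReal_sqrt_eq_cpow (sq_nonneg _),
      Real.sqrt_sq (by positivity)]
  have hexp :
      ((-(t * A) : ℝ) : ℂ) - (-2 * π * I * y) ^ 2 / (4 * -((α ^ 2 * t : ℝ) : ℂ)⁻¹) =
      ((-(((π * α * y) ^ 2 + A) * t) : ℝ) : ℂ) := by
    push_cast
    field_simp
    ring_nf
    rw [I_sq]
    ring
  rw [hsqrt, hexp, ← ofReal_exp, show s - 1 = s - 3 / 2 + 1 / 2 by ring, cpow_add _ _ htc]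
  ring

lemma integral_norm_heatKernel (hα : 0 < α) (ht : 0 < t) :
    ∫ k : ℝ, ‖heatKernel s α A t k‖ =
      α * √π * (t ^ (s.re - 1) * Real.exp (-(A * t))) := by
  have hsplit : ∀ k : ℝ, ‖heatKernel s α A t k‖ =
      t ^ (s.re - 3 / 2) * Real.exp (-(A * t)) * Real.exp (-(α ^ 2 * t)⁻¹ * k ^ 2) := by
    intro k
    rw [norm_heatKernel ht, mul_assoc, ← Real.exp_add]
    congr 2
    field_simp
    ring
  simp_rw [hsplit]
  rw [integral_const_mul, integral_gaussian, div_inv_eq_mul,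
    show π * (α ^ 2 * t) = (α * √π) ^ 2 * t by
      rw [mul_pow, Real.sq_sqrt Real.pi_pos.le]; ring,
    Real.sqrt_mul (sq_nonneg _), Real.sqrt_sq (by positivity),
    show s.re - 1 = s.re - 3 / 2 + 1 / 2 by ring, Real.rpow_add ht, ← Real.sqrt_eq_rpow]
  ring

lemma integrable_heatKernel_mul_cexp (hs : 0 < s.re) (hα : 0 < α) (hA : 0 < A) (y : ℝ) :
    Integrable (fun q : ℝ × ℝ => heatKernel s α A q.1 q.2 * cexp (-2 * π * I * q.2 * y))
      ((volume.restrict (Ioi 0)).prod volume) := by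
  have hmeas : AEStronglyMeasurable
      (fun q : ℝ × ℝ => heatKernel s α A q.1 q.2 * cexp (-2 * π * I * q.2 * y))
      ((volume.restrict (Ioi 0)).prod volume) :=
    aestronglyMeasurable_restrict_prod_of_continuousOn measurableSet_Ioi
      (continuousOn_heatKernel.mul (by fun_prop : Continuous fun q : ℝ × ℝ =>
        cexp (-2 * π * I * q.2 * y)).continuousOn)
  refine (integrable_prod_iff hmeas).2 ⟨?_, ?_⟩
  · filter_upwards [ae_restrict_mem measurableSet_Ioi] with t (ht : 0 < t)
    have hb : (-((α ^ 2 * t : ℝ) : ℂ)⁻¹).re < 0 := by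
      rw [neg_re, ← ofReal_inv, ofReal_re, neg_lt_zero]; positivity
    simp_rw [heatKernel_mul_cexp_eq ht]
    exact (integrable_cexp_quadratic' hb _ _).const_mul _
  · refine IntegrableOn.congr_fun ((integrableOn_rpow_mul_exp_neg_mul (a := s.re - 1)
      (by linarith) hA).const_mul (α * √π)) (fun t (ht : 0 < t) => ?_) measurableSet_Ioi
    simp_rw [norm_mul, norm_cexp_neg_two_pi_I_mul, mul_one, integral_norm_heatKernel hα ht]

lemma setIntegral_heatKernel_mul_cexp (y k : ℝ) :
    ∫ t in Ioi 0, heatKernel s α A t k * cexp (-2 * π * I * k * y) =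
      heatIntegral s α A k * cexp (-2 * π * I * k * y) :=
  integral_mul_const _ _

lemma integrable_heatIntegral_mul_cexp (hs : 0 < s.re) (hα : 0 < α) (hA : 0 < A) (y : ℝ) :
    Integrable (fun k => heatIntegral s α A k * cexp (-2 * π * I * k * y)) := by
  simpa only [setIntegral_heatKernel_mul_cexp] using
    (integrable_heatKernel_mul_cexp hs hα hA y).integral_prod_right

lemma integral_heatIntegral_mul_cexp (hs : 0 < s.re) (hα : 0 < α) (hA : 0 < A) (y : ℝ) :
    ∫ k, heatIntegral s α A k * cexp (-2 * π * I * k * y) =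
      ((α * √π : ℝ) : ℂ) * Gamma s * (((π * α * y) ^ 2 + A : ℝ) : ℂ) ^ (-s) := by
  have hR : 0 < (π * α * y) ^ 2 + A := by positivity
  simp_rw [← setIntegral_heatKernel_mul_cexp]
  rw [← integral_integral_swap
      (f := fun t k => heatKernel s α A t k * cexp (-2 * π * I * k * y))
      (integrable_heatKernel_mul_cexp hs hα hA y),
    setIntegral_congr_fun measurableSet_Ioi fun t ht => integral_heatKernel_mul_cexp hα ht y,
    integral_const_mul]
  simp_rw [ofReal_exp, ofReal_neg, ofReal_mul]
  rw [integral_cpow_mul_exp_neg_mul_Ioi hs hR, one_div,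
    inv_cpow _ _ (by rw [arg_ofReal_of_nonneg hR.le]; exact Real.pi_ne_zero.symm), ← cpow_neg]
  ring

lemma integral_norm_heatIntegral_mul_cexp_le (hs : 0 < s.re) (hα : 0 < α) (hA : 0 < A)
    (y : ℝ) : ∫ k, ‖heatIntegral s α A k * cexp (-2 * π * I * k * y)‖ ≤
      α * √π * Real.Gamma s.re * A ^ (-s.re) := by
  have hint := integrable_heatKernel_mul_cexp hs hα hA y
  calc ∫ k, ‖heatIntegral s α A k * cexp (-2 * π * I * k * y)‖
      ≤ ∫ k, ∫ t in Ioi 0, ‖heatKernel s α A t k * cexp (-2 * π * I * k * y)‖ := by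
        refine integral_mono (integrable_heatIntegral_mul_cexp hs hα hA y).norm
          hint.swap.integral_norm_prod_left fun k => ?_
        rw [← setIntegral_heatKernel_mul_cexp]
        exact norm_integral_le_integral_norm _
    _ = ∫ t in Ioi 0, α * √π * (t ^ (s.re - 1) * Real.exp (-(A * t))) := by
        rw [← integral_integral_swap
          (f := fun t k => ‖heatKernel s α A t k * cexp (-2 * π * I * k * y)‖) hint.norm]
        refine setIntegral_congr_fun measurableSet_Ioi fun t ht => ?_
        simp_rw [norm_mul, norm_cexp_neg_two_pi_I_mul, mul_one, integral_norm_heatKernel hα ht]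
    _ = α * √π * Real.Gamma s.re * A ^ (-s.re) := by
        rw [integral_const_mul, Real.integral_rpow_mul_exp_neg_mul_Ioi hs hA, one_div,
          Real.inv_rpow hA.le, ← Real.rpow_neg hA.le]
        ring

end HeatKernel

lemma summable_sq_norm_lat_add_rpow_neg {τ : ℂ} (hτ : τ.im ≠ 0) (z : ℂ) {σ : ℝ}
    (hσ : 1 < σ) :
    Summable fun p : ℤ × ℤ => (‖lat τ p + z‖ ^ 2) ^ (-σ) := by
  let L : PeriodPair := ⟨1, τ, LinearIndependent.pair_iff.2 fun a b h => by
    obtain rfl : b = 0 := by simpa [hτ] using congrArg im h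
    simpa using h⟩
  have := ZLattice.summable_norm_sub_rpow L.lattice (-(2 * σ))
    (by rw [ZLattice.rank ℝ, finrank_real_complex]; push_cast; linarith) (-z)
  rw [← L.latticeEquivProd.symm.toEquiv.summable_iff] at this
  convert this using 2 with p
  rw [← Real.rpow_natCast, ← Real.rpow_mul (norm_nonneg _)]
  simp [L.latticeEquiv_symm_apply, lat, L]

lemma norm_chi (τ γ w : ℂ) : ‖chi τ γ w‖ = 1 := by
  rw [chi, norm_exp, re_ofReal_mul, sub_re, ← conj_re (γ * _), map_mul, conj_conj, mul_comm,
    sub_self, zero_mul, Real.exp_zero]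

lemma chi_add_left (τ γ w v : ℂ) : chi τ (γ + w) v = chi τ γ v * chi τ w v := by
  rw [chi, chi, chi, ← Complex.exp_add, map_add]
  ring_nf

lemma lat_add_ne_zero {τ z : ℂ} (hz : z ∉ range (lat τ)) (p : ℤ × ℤ) :
    lat τ p + z ≠ 0 := by
  refine fun h => hz ⟨-p, ?_⟩
  rw [eq_neg_of_add_eq_zero_right h, lat, lat, Prod.fst_neg, Prod.snd_neg]
  push_cast
  ring

lemma Iser_div_eq_tsum (τ s z x : ℂ) (k : ℝ) :
    Iser τ s z x (k / (π * alf τ)) =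
      √π * ∑' p, chi τ (lat τ p + z) x *
        heatIntegral s (alf τ) (‖lat τ p + z‖ ^ 2) k := by
  have hk : π ^ 2 * (k / (π * alf τ)) ^ 2 = k ^ 2 / alf τ ^ 2 := by
    rw [div_pow, mul_pow, mul_div_assoc', mul_div_mul_left _ _ (by positivity)]
  simp only [Iser, heatIntegral, heatKernel, hk]

section LatticeTerm

variable {τ s : ℂ} (x z : ℂ) (y : ℝ) (p : ℤ × ℤ)

lemma integral_norm_lattice_term_le (hs : 0 < s.re) (hα : 0 < alf τ)
    (hA : 0 < ‖lat τ p + z‖ ^ 2) :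
    ∫ k : ℝ, ‖√π * chi τ (lat τ p + z) x *
        (heatIntegral s (alf τ) (‖lat τ p + z‖ ^ 2) k * cexp (-2 * π * I * k * y))‖ ≤
      π * alf τ * Real.Gamma s.re * (‖lat τ p + z‖ ^ 2) ^ (-s.re) := by
  simp_rw [norm_mul (_ * _), norm_mul (√π : ℂ), norm_chi, mul_one, norm_real,
    Real.norm_of_nonneg (Real.sqrt_nonneg _)]
  rw [integral_const_mul]
  calc _ ≤ √π * (alf τ * √π * Real.Gamma s.re * (‖lat τ p + z‖ ^ 2) ^ (-s.re)) :=
        mul_le_mul_of_nonneg_left (integral_norm_heatIntegral_mul_cexp_le hs hα hA y)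
          (Real.sqrt_nonneg _)
    _ = _ := by
        linear_combination (alf τ * Real.Gamma s.re * (‖lat τ p + z‖ ^ 2) ^ (-s.re)) *
          Real.mul_self_sqrt Real.pi_pos.le

lemma integral_lattice_term (hs : 0 < s.re) (hα : 0 < alf τ)
    (hA : 0 < ‖lat τ p + z‖ ^ 2) :
    ∫ k : ℝ, √π * chi τ (lat τ p + z) x *
        (heatIntegral s (alf τ) (‖lat τ p + z‖ ^ 2) k * cexp (-2 * π * I * k * y)) =
      ((π * alf τ : ℝ) : ℂ) * Gamma s * chi τ z x *
        (chi τ (lat τ p) x * (((π * alf τ * y) ^ 2 + ‖z + lat τ p‖ ^ 2 : ℝ) : ℂ) ^ (-s)) := by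
  rw [integral_const_mul, integral_heatIntegral_mul_cexp hs hα hA, chi_add_left,
    add_comm z (lat τ p)]
  have hπ : (√π : ℂ) * √π = π := by rw [← ofReal_mul, Real.mul_self_sqrt Real.pi_pos.le]
  push_cast
  linear_combination (alf τ * Gamma s * chi τ (lat τ p) x * chi τ z x *
    ((π * alf τ * y) ^ 2 + ‖lat τ p + z‖ ^ 2 : ℂ) ^ (-s)) * hπ

end LatticeTerm

/-- Lemma 3.1: the Fourier-integral representation
R(s,x,z,y) = (πα Γ(s) χ(z,x))⁻¹ ∫_{ℝ} I(s, z, x, k/(πα)) e^{−2πiky} dk for Re s > 3/2,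
the integral over k being absolutely convergent. -/
theorem Rser_fourier_representation (τ : ℂ) (hτ : 0 < τ.im) (s : ℂ)
    (hs : 3 / 2 < s.re) (x z : ℂ) (hz : z ∉ Set.range (lat τ)) (y : ℝ) :
    MeasureTheory.Integrable (fun k : ℝ =>
      Iser τ s z x (k / (Real.pi * alf τ)) *
        Complex.exp (-2 * Real.pi * Complex.I * k * y)) ∧
    Rser τ s x z y =
      (((Real.pi * alf τ : ℝ) : ℂ) * Complex.Gamma s * chi τ z x)⁻¹ *
        ∫ k : ℝ, Iser τ s z x (k / (Real.pi * alf τ)) *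
          Complex.exp (-2 * Real.pi * Complex.I * k * y) := by
  have hs0 : 0 < s.re := by linarith
  have hα : 0 < alf τ := div_pos hτ Real.pi_pos
  have hA (p : ℤ × ℤ) : 0 < ‖lat τ p + z‖ ^ 2 :=
    pow_pos (norm_pos_iff.2 (lat_add_ne_zero hz p)) 2
  set F : ℤ × ℤ → ℝ → ℂ := fun p k => √π * chi τ (lat τ p + z) x *
    (heatIntegral s (alf τ) (‖lat τ p + z‖ ^ 2) k * cexp (-2 * π * I * k * y))
  have hF_int (p : ℤ × ℤ) : Integrable (F p) :=
    (integrable_heatIntegral_mul_cexp hs0 hα (hA p) y).const_mul _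
  have hF_sum : Summable fun p => ∫ k, ‖F p k‖ :=
    .of_nonneg_of_le (fun p => integral_nonneg fun k => norm_nonneg _)
      (fun p => integral_norm_lattice_term_le x z y p hs0 hα (hA p))
      ((summable_sq_norm_lat_add_rpow_neg hτ.ne' z (by linarith)).mul_left _)
  have hIser (k : ℝ) :
      Iser τ s z x (k / (π * alf τ)) * cexp (-2 * π * I * k * y) = ∑' p, F p k := by
    rw [Iser_div_eq_tsum, ← tsum_mul_left, ← tsum_mul_right]
    exact tsum_congr fun p => by ring
  simp_rw [hIser]
  refine ⟨integrable_tsum_of_summable_integral_norm hF_int hF_sum, ?_⟩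
  rw [← integral_tsum_of_summable_integral_norm hF_int hF_sum]
  simp_rw [F, integral_lattice_term x z y _ hs0 hα (hA _)]
  rw [tsum_mul_left, ← Rser, inv_mul_cancel_left₀]
  exact mul_ne_zero (mul_ne_zero (by simp [hα.ne', Real.pi_ne_zero])
    (Gamma_ne_zero_of_re_pos hs0)) (exp_ne_zero _)
end
end

section
/- (Quasi-periodicity of R) Let Re s > 1, x, z ∈ ℂ and y ∈ ℝ∖{0}. Then R(s, x, z + 1, y) = exp(α⁻¹(x − conj x)) · R(s, x, z, y) and R(s, x, z + τ, y) = exp(α⁻¹(x·conj τ − conj(x)·τ)) · R(s, x, z, y). -/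
/-!
Translating `z` by a lattice vector `γ` and reindexing the lattice sum by `p ↦ p - γ` leaves the
weights `((παy)² + |z + γ|²)^{-s}` unchanged, while the character, being additive in its first
argument, contributes the constant factor `χ(-γ, x)`. For `γ = 1` and `γ = τ` this factor is the
stated exponential.
-/

noncomputable section

lemma lat_add (τ : ℂ) (p q : ℤ × ℤ) : lat τ (p + q) = lat τ p + lat τ q := by
  simp only [lat, Prod.fst_add, Prod.snd_add, Int.cast_add]
  ring

lemma lat_neg (τ : ℂ) (p : ℤ × ℤ) : lat τ (-p) = -lat τ p := by
  simp only [lat, Prod.fst_neg, Prod.snd_neg, Int.cast_neg]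
  ring

lemma chi_add (τ γ δ x : ℂ) : chi τ (γ + δ) x = chi τ γ x * chi τ δ x := by
  rw [chi, chi, chi, ← Complex.exp_add, map_add]
  ring_nf

lemma Rser_add_lat (τ s x z : ℂ) (y : ℝ) (q : ℤ × ℤ) :
    Rser τ s x (z + lat τ q) y = chi τ (-lat τ q) x * Rser τ s x z y := by
  rw [Rser, Rser, ← tsum_mul_left, ← (Equiv.addRight (-q)).tsum_eq]
  refine tsum_congr fun p => ?_
  have hlat : lat τ (p + -q) = -lat τ q + lat τ p := by rw [lat_add, lat_neg, add_comm]
  have hz : z + lat τ q + (-lat τ q + lat τ p) = z + lat τ p := by ring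
  rw [Equiv.coe_addRight, hlat, hz, chi_add, mul_assoc]

theorem R_quasi_periodicity_general (τ : ℂ) (s : ℂ)
    (x z : ℂ) (y : ℝ) :
    Rser τ s x (z + 1) y =
      Complex.exp (((alf τ)⁻¹ : ℝ) * (x - (starRingEnd ℂ) x)) * Rser τ s x z y ∧
    Rser τ s x (z + τ) y =
      Complex.exp (((alf τ)⁻¹ : ℝ) * (x * (starRingEnd ℂ) τ - (starRingEnd ℂ) x * τ)) *
        Rser τ s x z y := by
  have hone := Rser_add_lat τ s x z y (1, 0)
  have htau := Rser_add_lat τ s x z y (0, 1)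
  simp only [lat, Int.cast_one, Int.cast_zero, zero_mul, add_zero, zero_add, one_mul] at hone htau
  rw [hone, htau, chi, chi, map_neg, map_neg, map_one]
  constructor <;> ring_nf

/-- Quasi-periodicity of R in the variable z:
R(s, x, z+1, y) = exp(α⁻¹(x − conj x)) R(s, x, z, y) and
R(s, x, z+τ, y) = exp(α⁻¹(x·conj τ − conj x·τ)) R(s, x, z, y). -/
theorem R_quasi_periodicity (τ : ℂ) (hτ : 0 < τ.im) (s : ℂ) (hs : 1 < s.re)
    (x z : ℂ) (y : ℝ) (hy : y ≠ 0) :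
    Rser τ s x (z + 1) y =
      Complex.exp (((alf τ)⁻¹ : ℝ) * (x - (starRingEnd ℂ) x)) * Rser τ s x z y ∧
    Rser τ s x (z + τ) y =
      Complex.exp (((alf τ)⁻¹ : ℝ) * (x * (starRingEnd ℂ) τ - (starRingEnd ℂ) x * τ)) *
        Rser τ s x z y :=
  R_quasi_periodicity_general τ s x z y
end
end
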